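/- Let r, γ, T > 0, let ρ₀ ∈ L^∞(ℝ^d) with ρ₀ ≥ 0 and ‖ρ₀‖_{L^∞} ≤ r, and let ρ ∈ B_{T,γ}(r). Then for every t ∈ [0, T], ‖F(ρ)_t‖_{L^∞} ≤ e^{−t⟨c₂⟩} r [ 1 + (3⟨c₁⟩r / (2(2γ+1)⟨c₂⟩)) ( e^{(2γ+1)⟨c₂⟩t} − 1 ) + (2/(γ+1)) ( e^{(γ+1)⟨c₂⟩t} − 1 ) ]. -/

import Mathlib

open MeasureTheory Set

noncomputable section

/-- Euclidean space `ℝ^d`, modeled as functions `Fin d → ℝ`. -/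
abbrev Rd (d : ℕ) := Fin d → ℝ

/-- The (sup) `L^∞` norm of a function on `ℝ^d`. -/
def linf {d : ℕ} (f : Rd d → ℝ) : ℝ := ⨆ x, |f x|

/-- Membership in `L^∞(ℝ^d)`: measurable and (everywhere) bounded. -/
def MemLinf {d : ℕ} (f : Rd d → ℝ) : Prop := Measurable f ∧ ∃ M : ℝ, ∀ x, |f x| ≤ M

/-- `h(ρ,x) = (1/2) ∬ (c₁(x,y;z)+c₁(y,x;z)) ρ(y) dy dz + ⟨c₂⟩`. -/
def hker {d : ℕ} (c₁ : Rd d → Rd d → Rd d → ℝ) (C2 : ℝ) (ρ : Rd d → ℝ) (x : Rd d) : ℝ :=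
  1/2 * (∫ y, ∫ z, (c₁ x y z + c₁ y x z) * ρ y) + C2

/-- `R₂(ρ,x)`, the positive part of the right-hand side of the kinetic equation. -/
def R2 {d : ℕ} (c₁ : Rd d → Rd d → Rd d → ℝ) (c₂ : Rd d → Rd d → ℝ)
    (φ₁ φ₂ : Rd d → ℝ) (ρ : Rd d → ℝ) (x : Rd d) : ℝ :=
  1/2 * (∫ y, ∫ z, c₁ y z x * Real.exp (-∫ u, φ₁ (x - u) * ρ u) * ρ y * ρ z)
    + 1/2 * (∫ y, ∫ z, (c₁ x y z + c₁ y x z) *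
        (1 - Real.exp (-∫ u, φ₁ (z - u) * ρ u)) * ρ x * ρ y)
    + (∫ y, c₂ y x * Real.exp (-∫ u, φ₂ (x - u) * ρ u) * ρ y)
    + (∫ y, c₂ x y * (1 - Real.exp (-∫ u, φ₂ (y - u) * ρ u)) * ρ x)

/-- The fixed point map `F` given by the right-hand side of the integral equation. -/
def Fmap {d : ℕ} (c₁ : Rd d → Rd d → Rd d → ℝ) (c₂ : Rd d → Rd d → ℝ)
    (φ₁ φ₂ : Rd d → ℝ) (C2 : ℝ) (ρ₀ : Rd d → ℝ) (ρ : ℝ → Rd d → ℝ) (t : ℝ) (x : Rd d) : ℝ :=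
  ρ₀ x * Real.exp (-∫ s in (0:ℝ)..t, hker c₁ C2 (ρ s) x)
    + ∫ s in (0:ℝ)..t, R2 c₁ c₂ φ₁ φ₂ (ρ s) x * Real.exp (-∫ σ in s..t, hker c₁ C2 (ρ σ) x)

/-- The weighted norm `‖ρ‖_{T,γ} = sup_{t∈[0,T]} e^{-γ⟨c₂⟩t} ‖ρ_t‖_{L^∞}`. -/
def normTg {d : ℕ} (T γ C2 : ℝ) (ρ : ℝ → Rd d → ℝ) : ℝ :=
  ⨆ t : Icc (0:ℝ) T, Real.exp (-(γ * C2 * t.1)) * linf (ρ t.1)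

/-- Continuity on `S ⊆ ℝ` of a curve of functions, in the `L^∞` norm. -/
def LinfContOn {d : ℕ} (S : Set ℝ) (ρ : ℝ → Rd d → ℝ) : Prop :=
  ∀ t ∈ S, ∀ ε > 0, ∃ δ > 0, ∀ s ∈ S, |s - t| < δ → linf (fun x => ρ s x - ρ t x) < ε

/-- Membership in the ball `B_{T,γ}(r) ⊆ C([0,T] → L^∞)`. -/
def memB {d : ℕ} (T γ C2 r : ℝ) (ρ : ℝ → Rd d → ℝ) : Prop :=
  LinfContOn (Icc 0 T) ρ ∧ (∀ t ∈ Icc (0:ℝ) T, MemLinf (ρ t)) ∧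
    (∀ t ∈ Icc (0:ℝ) T, ∀ x, 0 ≤ ρ t x) ∧ normTg T γ C2 ρ ≤ r

/-- Differentiability at `t` (within `S ⊆ ℝ`) of a curve, in the `L^∞` norm,
with derivative `g`. -/
def HasLinfDerivWithinAt {d : ℕ} (ρ : ℝ → Rd d → ℝ) (g : Rd d → ℝ) (S : Set ℝ) (t : ℝ) : Prop :=
  ∀ ε > 0, ∃ δ > 0, ∀ s ∈ S, |s - t| < δ →
    linf (fun x => ρ s x - ρ t x - (s - t) * g x) ≤ ε * |s - t|

/-- The right-hand side of the kinetic equation: `−ρ(x) h(ρ,x) + R₂(ρ,x)`. -/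
def kderiv {d : ℕ} (c₁ : Rd d → Rd d → Rd d → ℝ) (c₂ : Rd d → Rd d → ℝ)
    (φ₁ φ₂ : Rd d → ℝ) (C2 : ℝ) (ρ : Rd d → ℝ) : Rd d → ℝ :=
  fun x => -(ρ x) * hker c₁ C2 ρ x + R2 c₁ c₂ φ₁ φ₂ ρ x

/-- `ρ` is a (local) classical solution of the kinetic equation on `[0,T]` with initial
value `ρ₀`: nonnegative and `L^∞`-valued, continuously differentiable in the `L^∞` norm,
and satisfying `d/dt ρ_t = −ρ_t·h(ρ_t,·) + R₂(ρ_t,·)`, `ρ_0 = ρ₀`. -/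
def IsSol {d : ℕ} (c₁ : Rd d → Rd d → Rd d → ℝ) (c₂ : Rd d → Rd d → ℝ)
    (φ₁ φ₂ : Rd d → ℝ) (C2 : ℝ) (ρ₀ : Rd d → ℝ) (T : ℝ) (ρ : ℝ → Rd d → ℝ) : Prop :=
  (∀ t ∈ Icc (0:ℝ) T, MemLinf (ρ t)) ∧ (∀ t ∈ Icc (0:ℝ) T, ∀ x, 0 ≤ ρ t x) ∧
    ρ 0 = ρ₀ ∧
    (∀ t ∈ Icc (0:ℝ) T, HasLinfDerivWithinAt ρ (kderiv c₁ c₂ φ₁ φ₂ C2 (ρ t)) (Icc 0 T) t) ∧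
    LinfContOn (Icc 0 T) (fun t => kderiv c₁ c₂ φ₁ φ₂ C2 (ρ t))


/-!
Since `h(ρ, ·) ≥ ⟨c₂⟩`, both exponential weights in `F` are at most `e^{-(t-s)⟨c₂⟩}`. Since the
exponentials inside `R₂` lie in `[0, 1]`, the normalisations of `c₁` and `c₂` give
`R₂(ρ_s, ·) ≤ (3/2)⟨c₁⟩ M_s² + 2⟨c₂⟩ M_s`, where `M_s = r e^{γ⟨c₂⟩s}` bounds `ρ_s` because
`‖ρ‖_{T,γ} ≤ r`. Integrating these bounds in `s` gives the claim.

Continuity of `t ↦ ρ_t` in `L^∞` is what makes `σ ↦ h(ρ_σ, x)` integrable and the supremum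
defining `‖ρ‖_{T,γ}` finite; without it the interval integral and `⨆` would take junk values.
-/

section LInfNorm

variable {d : ℕ}

lemma linf_nonneg (f : Rd d → ℝ) : 0 ≤ linf f :=
  Real.iSup_nonneg fun _ => abs_nonneg _

lemma abs_le_linf {f : Rd d → ℝ} {M : ℝ} (hf : ∀ x, |f x| ≤ M) (x : Rd d) : |f x| ≤ linf f :=
  le_ciSup ⟨M, by rintro _ ⟨y, rfl⟩; exact hf y⟩ x

lemma linf_le {f : Rd d → ℝ} {M : ℝ} (h : ∀ x, |f x| ≤ M) : linf f ≤ M :=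
  ciSup_le h

lemma linf_sub_comm (f g : Rd d → ℝ) :
    linf (fun x => f x - g x) = linf (fun x => g x - f x) := by
  simp only [linf, abs_sub_comm]

lemma linf_le_linf_sub_add {f g : Rd d → ℝ} {Mf Mg : ℝ}
    (hf : ∀ x, |f x| ≤ Mf) (hg : ∀ x, |g x| ≤ Mg) :
    linf f ≤ linf (fun x => f x - g x) + linf g := by
  have hfg : ∀ x, |f x - g x| ≤ Mf + Mg := fun x =>
    (abs_sub _ _).trans (add_le_add (hf x) (hg x))
  refine linf_le fun x => ?_
  linarith [abs_sub_abs_le_abs_sub (f x) (g x), abs_le_linf hfg x, abs_le_linf hg x]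

lemma abs_linf_sub_linf_le {f g : Rd d → ℝ} {Mf Mg : ℝ}
    (hf : ∀ x, |f x| ≤ Mf) (hg : ∀ x, |g x| ≤ Mg) :
    |linf f - linf g| ≤ linf (fun x => f x - g x) := by
  have h₁ := linf_le_linf_sub_add hf hg
  have h₂ := linf_le_linf_sub_add hg hf
  rw [linf_sub_comm] at h₂
  exact abs_sub_le_iff.mpr ⟨by linarith, by linarith⟩

lemma LinfContOn.continuousOn_comp {S : Set ℝ} {ρ : ℝ → Rd d → ℝ} (hρ : LinfContOn S ρ)
    {Φ : (Rd d → ℝ) → ℝ} {K : ℝ}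
    (hΦ : ∀ a ∈ S, ∀ b ∈ S, |Φ (ρ a) - Φ (ρ b)| ≤ K * linf (fun x => ρ a x - ρ b x)) :
    ContinuousOn (fun t => Φ (ρ t)) S := by
  rw [Metric.continuousOn_iff]
  intro b hb ε hε
  obtain ⟨δ, hδ, hρδ⟩ := hρ b hb (ε / (|K| + 1)) (by positivity)
  refine ⟨δ, hδ, fun a ha hab => ?_⟩
  rw [Real.dist_eq] at hab ⊢
  have hdist := hρδ a ha hab
  have hK : K * linf (fun x => ρ a x - ρ b x) ≤ |K| * (ε / (|K| + 1)) :=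
    (mul_le_mul_of_nonneg_right (le_abs_self K) (linf_nonneg _)).trans
      (mul_le_mul_of_nonneg_left hdist.le (abs_nonneg K))
  have hlt : |K| * (ε / (|K| + 1)) < ε := by
    rw [mul_div_assoc', div_lt_iff₀ (by positivity)]
    linarith
  exact ((hΦ a ha b hb).trans hK).trans_lt hlt

end LInfNorm

section IntegralComparison

variable {α β : Type*} [MeasurableSpace α] [MeasurableSpace β] {μ : Measure α} {ν : Measure β}

lemma integral_le_mul_integral {f K : α → ℝ} {M : ℝ} (hK : Integrable K μ)
    (hf : ∀ᵐ y ∂μ, 0 ≤ f y) (hfK : ∀ᵐ y ∂μ, f y ≤ M * K y) :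
    ∫ y, f y ∂μ ≤ M * ∫ y, K y ∂μ := by
  rw [← integral_const_mul]
  exact integral_mono_of_nonneg hf (hK.const_mul M) hfK

lemma integral_integral_le_mul_integral_integral [SFinite μ] [SFinite ν] {f K : α → β → ℝ} {M : ℝ}
    (hK : Integrable (Function.uncurry K) (μ.prod ν))
    (hf : ∀ y z, 0 ≤ f y z) (hfK : ∀ y z, f y z ≤ M * K y z) :
    ∫ y, ∫ z, f y z ∂ν ∂μ ≤ M * ∫ y, ∫ z, K y z ∂ν ∂μ := by
  refine integral_le_mul_integral hK.integral_prod_left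
    (ae_of_all _ fun y => integral_nonneg (hf y)) ?_
  filter_upwards [hK.prod_right_ae] with y hKy
  exact integral_le_mul_integral hKy (ae_of_all _ (hf y)) (ae_of_all _ (hfK y))

lemma abs_integral_mul_le {g f : α → ℝ} {M : ℝ} (hg : Integrable g μ)
    (hg₀ : ∀ y, 0 ≤ g y) (hfM : ∀ y, |f y| ≤ M) :
    |∫ y, g y * f y ∂μ| ≤ M * ∫ y, g y ∂μ := by
  refine (abs_integral_le_integral_abs).trans (integral_le_mul_integral hg
    (ae_of_all _ fun y => abs_nonneg _) (ae_of_all _ fun y => ?_))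
  rw [abs_mul, abs_of_nonneg (hg₀ y), mul_comm M]
  exact mul_le_mul_of_nonneg_left (hfM y) (hg₀ y)

end IntegralComparison

lemma integral_exp_mul {c : ℝ} (hc : c ≠ 0) (t : ℝ) :
    ∫ s in (0:ℝ)..t, Real.exp (c * s) = (Real.exp (c * t) - 1) / c := by
  rw [intervalIntegral.integral_comp_mul_left (fun s => Real.exp s) hc, integral_exp, mul_zero,
    Real.exp_zero, smul_eq_mul, inv_mul_eq_div]

lemma intervalIntegral_mono_of_nonneg {f g : ℝ → ℝ} {a b : ℝ} (hab : a ≤ b)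
    (hf : ∀ s ∈ Icc a b, 0 ≤ f s) (hg : IntervalIntegrable g volume a b)
    (hfg : ∀ s ∈ Icc a b, f s ≤ g s) :
    ∫ s in a..b, f s ≤ ∫ s in a..b, g s := by
  rw [intervalIntegral.integral_of_le hab, intervalIntegral.integral_of_le hab]
  exact integral_mono_of_nonneg
    (ae_restrict_of_forall_mem measurableSet_Ioc fun s hs => hf s (Ioc_subset_Icc_self hs)) hg.1
    (ae_restrict_of_forall_mem measurableSet_Ioc fun s hs => hfg s (Ioc_subset_Icc_self hs))

section Duhamel

variable {h : ℝ → ℝ} {κ t : ℝ}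

lemma exp_neg_integral_le_of_le (hh : ContinuousOn h (Icc 0 t)) (hκ : ∀ σ ∈ Icc 0 t, κ ≤ h σ)
    (s : ℝ) (hs : s ∈ Icc 0 t) :
    Real.exp (-∫ σ in s..t, h σ) ≤ Real.exp (-((t - s) * κ)) := by
  have hst : Icc s t ⊆ Icc 0 t := Icc_subset_Icc_left hs.1
  have hint : IntervalIntegrable h volume s t :=
    (hh.mono (by rwa [uIcc_of_le hs.2])).intervalIntegrable
  rw [Real.exp_le_exp, neg_le_neg_iff, ← smul_eq_mul, ← intervalIntegral.integral_const]
  exact intervalIntegral.integral_mono_on hs.2 intervalIntegrable_const hint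
    fun σ hσ => hκ σ (hst hσ)

/-- The left side is the Duhamel formula for `u' = -h u + R`, `u 0 = a₀`. -/
lemma duhamel_le {R B : ℝ → ℝ} {a₀ a : ℝ} (ht : 0 ≤ t)
    (hh : ContinuousOn h (Icc 0 t)) (hκ : ∀ σ ∈ Icc 0 t, κ ≤ h σ)
    (hR₀ : ∀ s ∈ Icc 0 t, 0 ≤ R s) (hRB : ∀ s ∈ Icc 0 t, R s ≤ B s)
    (hB : ContinuousOn B (Icc 0 t)) (ha₀ : a₀ ≤ a) (ha : 0 ≤ a) :
    a₀ * Real.exp (-∫ s in (0:ℝ)..t, h s) + ∫ s in (0:ℝ)..t, R s * Real.exp (-∫ σ in s..t, h σ)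
      ≤ a * Real.exp (-(t * κ)) + ∫ s in (0:ℝ)..t, B s * Real.exp (-((t - s) * κ)) := by
  have hweight := exp_neg_integral_le_of_le hh hκ
  have hinitial : a₀ * Real.exp (-∫ s in (0:ℝ)..t, h s) ≤ a * Real.exp (-(t * κ)) := by
    have h0 := hweight 0 ⟨le_rfl, ht⟩
    rw [sub_zero] at h0
    exact (mul_le_mul_of_nonneg_right ha₀ (Real.exp_pos _).le).trans
      (mul_le_mul_of_nonneg_left h0 ha)
  have hgain : ∫ s in (0:ℝ)..t, R s * Real.exp (-∫ σ in s..t, h σ)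
      ≤ ∫ s in (0:ℝ)..t, B s * Real.exp (-((t - s) * κ)) := by
    refine intervalIntegral_mono_of_nonneg ht
      (fun s hs => mul_nonneg (hR₀ s hs) (Real.exp_pos _).le) ?_
      (fun s hs => mul_le_mul (hRB s hs) (hweight s hs) (Real.exp_pos _).le
        ((hR₀ s hs).trans (hRB s hs)))
    refine (hB.mul ?_).intervalIntegrable_of_Icc ht
    fun_prop
  exact add_le_add hinitial hgain

end Duhamel

lemma exp_neg_mem_Icc {a : ℝ} (ha : 0 ≤ a) : Real.exp (-a) ∈ Icc (0:ℝ) 1 :=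
  ⟨(Real.exp_pos _).le, Real.exp_le_one_iff.mpr (neg_nonpos.mpr ha)⟩

lemma one_sub_exp_neg_mem_Icc {a : ℝ} (ha : 0 ≤ a) : 1 - Real.exp (-a) ∈ Icc (0:ℝ) 1 := by
  obtain ⟨h₀, h₁⟩ := exp_neg_mem_Icc ha
  exact ⟨by linarith, by linarith⟩

lemma mul_mul_le_of_mem_Icc {k E a M : ℝ} (hk : 0 ≤ k) (hE : E ∈ Icc (0:ℝ) 1)
    (ha : a ∈ Icc 0 M) : k * E * a ≤ M * k := by
  obtain ⟨hE₀, hE₁⟩ := hE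
  obtain ⟨ha₀, haM⟩ := ha
  calc k * E * a ≤ k * 1 * M := by gcongr
    _ = M * k := by ring

lemma mul_mul_mul_le_of_mem_Icc {k E a b M : ℝ} (hk : 0 ≤ k) (hE : E ∈ Icc (0:ℝ) 1)
    (ha : a ∈ Icc 0 M) (hb : b ∈ Icc 0 M) : k * E * a * b ≤ M ^ 2 * k := by
  calc k * E * a * b ≤ (M * k) * M :=
        mul_le_mul (mul_mul_le_of_mem_Icc hk hE ha) hb.2 hb.1 (mul_nonneg (ha.1.trans ha.2) hk)
    _ = M ^ 2 * k := by ring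

section Kernels

variable {d : ℕ} {c₁ : Rd d → Rd d → Rd d → ℝ} {C1 C2 : ℝ}

lemma integral_integral_add_swap_eq
    (hc₁int₁₃ : ∀ y, Integrable fun p : Rd d × Rd d => c₁ p.1 y p.2)
    (hc₁int₂₃ : ∀ x, Integrable fun p : Rd d × Rd d => c₁ x p.1 p.2)
    (hc₁val₁₃ : ∀ y, (∫ x, ∫ z, c₁ x y z) = C1)
    (hc₁val₂₃ : ∀ x, (∫ y, ∫ z, c₁ x y z) = C1) (x : Rd d) :
    ∫ y, ∫ z, c₁ x y z + c₁ y x z = 2 * C1 := by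
  have hsum := integral_integral (f := fun y z => c₁ x y z + c₁ y x z)
    ((hc₁int₂₃ x).add (hc₁int₁₃ x))
  have h₁ := integral_integral (f := fun y z => c₁ x y z) (hc₁int₂₃ x)
  have h₂ := integral_integral (f := fun y z => c₁ y x z) (hc₁int₁₃ x)
  rw [← Measure.volume_eq_prod] at hsum h₁ h₂
  rw [hsum, integral_add (hc₁int₂₃ x) (hc₁int₁₃ x), ← h₁, ← h₂, hc₁val₂₃ x, hc₁val₁₃ x]
  ring

lemma hker_eq_integral_mul (ρ : Rd d → ℝ) (x : Rd d) :
    hker c₁ C2 ρ x = 1/2 * (∫ y, (∫ z, c₁ x y z + c₁ y x z) * ρ y) + C2 := by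
  simp only [hker, integral_mul_const]

lemma le_hker (hc₁nn : ∀ x y z, 0 ≤ c₁ x y z) {ρ : Rd d → ℝ} (hρ : ∀ y, 0 ≤ ρ y) (x : Rd d) :
    C2 ≤ hker c₁ C2 ρ x := by
  have : 0 ≤ ∫ y, ∫ z, (c₁ x y z + c₁ y x z) * ρ y :=
    integral_nonneg fun y => integral_nonneg fun z =>
      mul_nonneg (add_nonneg (hc₁nn _ _ _) (hc₁nn _ _ _)) (hρ y)
  unfold hker
  linarith

lemma abs_hker_sub_hker_le (hc₁nn : ∀ x y z, 0 ≤ c₁ x y z)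
    (hc₁int₁₃ : ∀ y, Integrable fun p : Rd d × Rd d => c₁ p.1 y p.2)
    (hc₁int₂₃ : ∀ x, Integrable fun p : Rd d × Rd d => c₁ x p.1 p.2)
    (hc₁val₁₃ : ∀ y, (∫ x, ∫ z, c₁ x y z) = C1)
    (hc₁val₂₃ : ∀ x, (∫ y, ∫ z, c₁ x y z) = C1)
    {ρ₁ ρ₂ : Rd d → ℝ} (hρ₁ : MemLinf ρ₁) (hρ₂ : MemLinf ρ₂) (x : Rd d) :
    |hker c₁ C2 ρ₁ x - hker c₁ C2 ρ₂ x| ≤ C1 * linf (fun y => ρ₁ y - ρ₂ y) := by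
  obtain ⟨hm₁, M₁, hM₁⟩ := hρ₁
  obtain ⟨hm₂, M₂, hM₂⟩ := hρ₂
  set G : Rd d → ℝ := fun y => ∫ z, c₁ x y z + c₁ y x z
  have hG : Integrable G := ((hc₁int₂₃ x).add (hc₁int₁₃ x)).integral_prod_left
  have hGρ : ∀ {ρ : Rd d → ℝ} {M : ℝ}, Measurable ρ → (∀ y, |ρ y| ≤ M) →
      Integrable fun y => G y * ρ y := fun hm hM =>
    hG.mul_bdd hm.aestronglyMeasurable (ae_of_all _ hM)
  have hdiff : hker c₁ C2 ρ₁ x - hker c₁ C2 ρ₂ x = 1/2 * ∫ y, G y * (ρ₁ y - ρ₂ y) := by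
    simp only [hker_eq_integral_mul, mul_sub, integral_sub (hGρ hm₁ hM₁) (hGρ hm₂ hM₂)]
    ring
  have hbound := abs_integral_mul_le hG
    (fun y => integral_nonneg fun z => add_nonneg (hc₁nn _ _ _) (hc₁nn _ _ _))
    (abs_le_linf (M := M₁ + M₂) fun y => (abs_sub _ _).trans (add_le_add (hM₁ y) (hM₂ y)))
  rw [integral_integral_add_swap_eq hc₁int₁₃ hc₁int₂₃ hc₁val₁₃ hc₁val₂₃ x] at hbound
  rw [hdiff, abs_mul, abs_of_pos (by norm_num : (0:ℝ) < 1/2)]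
  linarith

end Kernels

section Gain

variable {d : ℕ} {c₁ : Rd d → Rd d → Rd d → ℝ} {c₂ : Rd d → Rd d → ℝ} {φ₁ φ₂ : Rd d → ℝ}
  {C1 C2 : ℝ} {ρ : Rd d → ℝ}

lemma integral_comp_sub_mul_nonneg {φ : Rd d → ℝ} (hφ : ∀ u, 0 ≤ φ u) (hρ : ∀ u, 0 ≤ ρ u)
    (w : Rd d) : 0 ≤ ∫ u, φ (w - u) * ρ u :=
  integral_nonneg fun u => mul_nonneg (hφ _) (hρ u)

lemma R2_nonneg (hc₁nn : ∀ x y z, 0 ≤ c₁ x y z) (hc₂nn : ∀ x y, 0 ≤ c₂ x y)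
    (hφ₁nn : ∀ u, 0 ≤ φ₁ u) (hφ₂nn : ∀ u, 0 ≤ φ₂ u) (hρ : ∀ y, 0 ≤ ρ y) (x : Rd d) :
    0 ≤ R2 c₁ c₂ φ₁ φ₂ ρ x := by
  have e₁ w := (exp_neg_mem_Icc (integral_comp_sub_mul_nonneg hφ₁nn hρ w)).1
  have e₂ w := (exp_neg_mem_Icc (integral_comp_sub_mul_nonneg hφ₂nn hρ w)).1
  have f₁ w := (one_sub_exp_neg_mem_Icc (integral_comp_sub_mul_nonneg hφ₁nn hρ w)).1
  have f₂ w := (one_sub_exp_neg_mem_Icc (integral_comp_sub_mul_nonneg hφ₂nn hρ w)).1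
  unfold R2
  refine add_nonneg (add_nonneg (add_nonneg (mul_nonneg (by norm_num) ?_)
    (mul_nonneg (by norm_num) ?_)) ?_) ?_ <;> refine integral_nonneg fun y => ?_
  · exact integral_nonneg fun z =>
      mul_nonneg (mul_nonneg (mul_nonneg (hc₁nn _ _ _) (e₁ x)) (hρ y)) (hρ z)
  · exact integral_nonneg fun z =>
      mul_nonneg (mul_nonneg (mul_nonneg (add_nonneg (hc₁nn _ _ _) (hc₁nn _ _ _)) (f₁ z)) (hρ x))
        (hρ y)
  · exact mul_nonneg (mul_nonneg (hc₂nn _ _) (e₂ x)) (hρ y)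
  · exact mul_nonneg (mul_nonneg (hc₂nn _ _) (f₂ y)) (hρ x)

lemma R2_le (hc₁nn : ∀ x y z, 0 ≤ c₁ x y z)
    (hc₁int₁₂ : ∀ z, Integrable fun p : Rd d × Rd d => c₁ p.1 p.2 z)
    (hc₁int₁₃ : ∀ y, Integrable fun p : Rd d × Rd d => c₁ p.1 y p.2)
    (hc₁int₂₃ : ∀ x, Integrable fun p : Rd d × Rd d => c₁ x p.1 p.2)
    (hc₁val₁₂ : ∀ z, (∫ x, ∫ y, c₁ x y z) = C1)
    (hc₁val₁₃ : ∀ y, (∫ x, ∫ z, c₁ x y z) = C1)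
    (hc₁val₂₃ : ∀ x, (∫ y, ∫ z, c₁ x y z) = C1)
    (hc₂nn : ∀ x y, 0 ≤ c₂ x y)
    (hc₂int₁ : ∀ y, Integrable fun x => c₂ x y)
    (hc₂int₂ : ∀ x, Integrable fun y => c₂ x y)
    (hc₂val₁ : ∀ y, (∫ x, c₂ x y) = C2)
    (hc₂val₂ : ∀ x, (∫ y, c₂ x y) = C2)
    (hφ₁nn : ∀ u, 0 ≤ φ₁ u) (hφ₂nn : ∀ u, 0 ≤ φ₂ u)
    {M : ℝ} (hρ : ∀ y, ρ y ∈ Icc 0 M) (x : Rd d) :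
    R2 c₁ c₂ φ₁ φ₂ ρ x ≤ 3/2 * C1 * M ^ 2 + 2 * C2 * M := by
  have hρ₀ y := (hρ y).1
  have e₁ w := exp_neg_mem_Icc (integral_comp_sub_mul_nonneg hφ₁nn hρ₀ w)
  have e₂ w := exp_neg_mem_Icc (integral_comp_sub_mul_nonneg hφ₂nn hρ₀ w)
  have f₁ w := one_sub_exp_neg_mem_Icc (integral_comp_sub_mul_nonneg hφ₁nn hρ₀ w)
  have f₂ w := one_sub_exp_neg_mem_Icc (integral_comp_sub_mul_nonneg hφ₂nn hρ₀ w)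
  have hc₁sum y z : 0 ≤ c₁ x y z + c₁ y x z := add_nonneg (hc₁nn _ _ _) (hc₁nn _ _ _)
  have t₁ : (∫ y, ∫ z, c₁ y z x * Real.exp (-∫ u, φ₁ (x - u) * ρ u) * ρ y * ρ z)
      ≤ M ^ 2 * C1 := by
    rw [← hc₁val₁₂ x]
    exact integral_integral_le_mul_integral_integral (hc₁int₁₂ x)
      (fun y z => mul_nonneg (mul_nonneg (mul_nonneg (hc₁nn _ _ _) (e₁ x).1) (hρ₀ y)) (hρ₀ z))
      (fun y z => mul_mul_mul_le_of_mem_Icc (hc₁nn _ _ _) (e₁ x) (hρ y) (hρ z))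
  have t₂ : (∫ y, ∫ z, (c₁ x y z + c₁ y x z) *
      (1 - Real.exp (-∫ u, φ₁ (z - u) * ρ u)) * ρ x * ρ y) ≤ M ^ 2 * (2 * C1) := by
    rw [← integral_integral_add_swap_eq hc₁int₁₃ hc₁int₂₃ hc₁val₁₃ hc₁val₂₃ x]
    exact integral_integral_le_mul_integral_integral ((hc₁int₂₃ x).add (hc₁int₁₃ x))
      (fun y z => mul_nonneg (mul_nonneg (mul_nonneg (hc₁sum y z) (f₁ z).1) (hρ₀ x)) (hρ₀ y))
      (fun y z => mul_mul_mul_le_of_mem_Icc (hc₁sum y z) (f₁ z) (hρ x) (hρ y))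
  have t₃ : (∫ y, c₂ y x * Real.exp (-∫ u, φ₂ (x - u) * ρ u) * ρ y) ≤ M * C2 := by
    rw [← hc₂val₁ x]
    exact integral_le_mul_integral (hc₂int₁ x)
      (ae_of_all _ fun y => mul_nonneg (mul_nonneg (hc₂nn _ _) (e₂ x).1) (hρ₀ y))
      (ae_of_all _ fun y => mul_mul_le_of_mem_Icc (hc₂nn _ _) (e₂ x) (hρ y))
  have t₄ : (∫ y, c₂ x y * (1 - Real.exp (-∫ u, φ₂ (y - u) * ρ u)) * ρ x) ≤ M * C2 := by
    rw [← hc₂val₂ x]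
    exact integral_le_mul_integral (hc₂int₂ x)
      (ae_of_all _ fun y => mul_nonneg (mul_nonneg (hc₂nn _ _) (f₂ y).1) (hρ₀ x))
      (ae_of_all _ fun y => mul_mul_le_of_mem_Icc (hc₂nn _ _) (f₂ y) (hρ x))
  unfold R2
  linarith

end Gain

section Curves

variable {d : ℕ} {S : Set ℝ} {ρ : ℝ → Rd d → ℝ}

lemma LinfContOn.continuousOn_linf (hρ : LinfContOn S ρ) (hmem : ∀ t ∈ S, MemLinf (ρ t)) :
    ContinuousOn (fun t => linf (ρ t)) S := by
  refine hρ.continuousOn_comp (K := 1) fun a ha b hb => ?_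
  obtain ⟨-, Ma, hMa⟩ := hmem a ha
  obtain ⟨-, Mb, hMb⟩ := hmem b hb
  rw [one_mul]
  exact abs_linf_sub_linf_le hMa hMb

lemma LinfContOn.continuousOn_hker {c₁ : Rd d → Rd d → Rd d → ℝ} {C1 C2 : ℝ}
    (hρ : LinfContOn S ρ) (hmem : ∀ t ∈ S, MemLinf (ρ t))
    (hc₁nn : ∀ x y z, 0 ≤ c₁ x y z)
    (hc₁int₁₃ : ∀ y, Integrable fun p : Rd d × Rd d => c₁ p.1 y p.2)
    (hc₁int₂₃ : ∀ x, Integrable fun p : Rd d × Rd d => c₁ x p.1 p.2)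
    (hc₁val₁₃ : ∀ y, (∫ x, ∫ z, c₁ x y z) = C1)
    (hc₁val₂₃ : ∀ x, (∫ y, ∫ z, c₁ x y z) = C1) (x : Rd d) :
    ContinuousOn (fun σ => hker c₁ C2 (ρ σ) x) S :=
  hρ.continuousOn_comp (Φ := fun f => hker c₁ C2 f x) fun a ha b hb =>
    abs_hker_sub_hker_le hc₁nn hc₁int₁₃ hc₁int₂₃ hc₁val₁₃ hc₁val₂₃ (hmem a ha) (hmem b hb) x

lemma abs_le_of_memB {T γ C2 r : ℝ} (hρ : memB T γ C2 r ρ) {s : ℝ} (hs : s ∈ Icc 0 T)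
    (x : Rd d) : |ρ s x| ≤ r * Real.exp (γ * C2 * s) := by
  obtain ⟨hcont, hmem, -, hnorm⟩ := hρ
  have hweighted : ContinuousOn (fun t => Real.exp (-(γ * C2 * t)) * linf (ρ t)) (Icc 0 T) :=
    (Continuous.continuousOn (by fun_prop)).mul (hcont.continuousOn_linf hmem)
  have hbdd :
      BddAbove (range fun t : Icc (0:ℝ) T => Real.exp (-(γ * C2 * t.1)) * linf (ρ t.1)) := by
    simpa only [image_eq_range] using isCompact_Icc.bddAbove_image hweighted
  have hle : Real.exp (-(γ * C2 * s)) * linf (ρ s) ≤ r :=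
    (le_ciSup hbdd ⟨s, hs⟩).trans hnorm
  obtain ⟨-, M, hM⟩ := hmem s hs
  calc |ρ s x| ≤ linf (ρ s) := abs_le_linf hM x
    _ ≤ r * Real.exp (γ * C2 * s) := by
      rwa [Real.exp_neg, inv_mul_le_iff₀ (Real.exp_pos _), mul_comm] at hle

end Curves

lemma integral_gain_bound_eq {C1 C2 r γ t : ℝ} (hC2 : C2 ≠ 0) (hγ₁ : γ + 1 ≠ 0)
    (hγ₂ : 2 * γ + 1 ≠ 0) :
    ∫ s in (0:ℝ)..t, (3/2 * C1 * (r * Real.exp (γ * C2 * s)) ^ 2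
        + 2 * C2 * (r * Real.exp (γ * C2 * s))) * Real.exp (-((t - s) * C2))
      = Real.exp (-(t * C2)) * r *
          (3 * C1 * r / (2 * (2 * γ + 1) * C2) * (Real.exp ((2 * γ + 1) * C2 * t) - 1)
            + 2 / (γ + 1) * (Real.exp ((γ + 1) * C2 * t) - 1)) := by
  have hpoint : ∀ s, (3/2 * C1 * (r * Real.exp (γ * C2 * s)) ^ 2
      + 2 * C2 * (r * Real.exp (γ * C2 * s))) * Real.exp (-((t - s) * C2))
      = Real.exp (-(t * C2)) * (3/2 * C1 * r ^ 2 * Real.exp ((2 * γ + 1) * C2 * s)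
          + 2 * C2 * r * Real.exp ((γ + 1) * C2 * s)) := by
    intro s
    have h₁ : Real.exp ((2 * γ + 1) * C2 * s) = Real.exp (γ * C2 * s) ^ 2 * Real.exp (C2 * s) := by
      rw [sq, ← Real.exp_add, ← Real.exp_add]; ring_nf
    have h₂ : Real.exp ((γ + 1) * C2 * s) = Real.exp (γ * C2 * s) * Real.exp (C2 * s) := by
      rw [← Real.exp_add]; ring_nf
    have h₃ : Real.exp (-((t - s) * C2)) = Real.exp (-(t * C2)) * Real.exp (C2 * s) := by
      rw [← Real.exp_add]; ring_nf
    rw [h₁, h₂, h₃]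
    ring
  have hint : ∀ a c : ℝ, IntervalIntegrable (fun s => a * Real.exp (c * s)) volume 0 t :=
    fun a c => (by fun_prop : Continuous fun s => a * Real.exp (c * s)).intervalIntegrable 0 t
  simp only [hpoint, intervalIntegral.integral_const_mul,
    intervalIntegral.integral_add (hint _ _) (hint _ _),
    integral_exp_mul (mul_ne_zero hγ₂ hC2), integral_exp_mul (mul_ne_zero hγ₁ hC2)]
  field_simp

theorem statement12_general {d : ℕ}
    (c₁ : Rd d → Rd d → Rd d → ℝ) (C1 : ℝ)
    (hc₁nn : ∀ x y z, 0 ≤ c₁ x y z)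
    (hc₁int₁₂ : ∀ z, Integrable fun p : Rd d × Rd d => c₁ p.1 p.2 z)
    (hc₁int₁₃ : ∀ y, Integrable fun p : Rd d × Rd d => c₁ p.1 y p.2)
    (hc₁int₂₃ : ∀ x, Integrable fun p : Rd d × Rd d => c₁ x p.1 p.2)
    (hc₁val₁₂ : ∀ z, (∫ x, ∫ y, c₁ x y z) = C1)
    (hc₁val₁₃ : ∀ y, (∫ x, ∫ z, c₁ x y z) = C1)
    (hc₁val₂₃ : ∀ x, (∫ y, ∫ z, c₁ x y z) = C1)
    (c₂ : Rd d → Rd d → ℝ) (C2 : ℝ)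
    (hc₂nn : ∀ x y, 0 ≤ c₂ x y)
    (hc₂int₁ : ∀ y, Integrable fun x => c₂ x y)
    (hc₂int₂ : ∀ x, Integrable fun y => c₂ x y)
    (hc₂val₁ : ∀ y, (∫ x, c₂ x y) = C2)
    (hc₂val₂ : ∀ x, (∫ y, c₂ x y) = C2)
    (hC2pos : 0 < C2)
    (φ₁ : Rd d → ℝ) (hφ₁nn : ∀ u, 0 ≤ φ₁ u)
    (φ₂ : Rd d → ℝ) (hφ₂nn : ∀ u, 0 ≤ φ₂ u)
    (r γ T : ℝ) (hr : 0 < r) (hγ : 0 < γ)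
    (ρ₀ : Rd d → ℝ) (hρ₀mem : MemLinf ρ₀) (hρ₀nn : ∀ x, 0 ≤ ρ₀ x)
    (hρ₀r : linf ρ₀ ≤ r)
    (ρ : ℝ → Rd d → ℝ) (hρ : memB T γ C2 r ρ) :
    ∀ t ∈ Icc (0:ℝ) T,
      linf (Fmap c₁ c₂ φ₁ φ₂ C2 ρ₀ ρ t)
        ≤ Real.exp (-(t * C2)) * r *
            (1 + 3 * C1 * r / (2 * (2 * γ + 1) * C2) * (Real.exp ((2 * γ + 1) * C2 * t) - 1)
              + 2 / (γ + 1) * (Real.exp ((γ + 1) * C2 * t) - 1)) := by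
  intro t ⟨ht₀, htT⟩
  obtain ⟨-, M₀, hM₀⟩ := hρ₀mem
  have hsub : Icc 0 t ⊆ Icc 0 T := Icc_subset_Icc_right htT
  have hρnn : ∀ s ∈ Icc 0 t, ∀ y, 0 ≤ ρ s y := fun s hs => hρ.2.2.1 s (hsub hs)
  have hρbound : ∀ s ∈ Icc 0 t, ∀ y, ρ s y ∈ Icc 0 (r * Real.exp (γ * C2 * s)) :=
    fun s hs y => ⟨hρnn s hs y, (le_abs_self _).trans (abs_le_of_memB hρ (hsub hs) y)⟩
  have hF₀ : ∀ x, 0 ≤ Fmap c₁ c₂ φ₁ φ₂ C2 ρ₀ ρ t x := fun x =>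
    add_nonneg (mul_nonneg (hρ₀nn x) (Real.exp_pos _).le)
      (intervalIntegral.integral_nonneg ht₀ fun s hs => mul_nonneg
        (R2_nonneg hc₁nn hc₂nn hφ₁nn hφ₂nn (hρnn s hs) x) (Real.exp_pos _).le)
  have hF : ∀ x, Fmap c₁ c₂ φ₁ φ₂ C2 ρ₀ ρ t x
      ≤ r * Real.exp (-(t * C2)) + ∫ s in (0:ℝ)..t, (3/2 * C1 * (r * Real.exp (γ * C2 * s)) ^ 2
        + 2 * C2 * (r * Real.exp (γ * C2 * s))) * Real.exp (-((t - s) * C2)) := fun x =>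
    duhamel_le ht₀
      ((hρ.1.continuousOn_hker hρ.2.1 hc₁nn hc₁int₁₃ hc₁int₂₃ hc₁val₁₃ hc₁val₂₃ x).mono hsub)
      (fun σ hσ => le_hker hc₁nn (hρnn σ hσ) x)
      (fun s hs => R2_nonneg hc₁nn hc₂nn hφ₁nn hφ₂nn (hρnn s hs) x)
      (fun s hs => R2_le hc₁nn hc₁int₁₂ hc₁int₁₃ hc₁int₂₃ hc₁val₁₂ hc₁val₁₃ hc₁val₂₃
        hc₂nn hc₂int₁ hc₂int₂ hc₂val₁ hc₂val₂ hφ₁nn hφ₂nn (hρbound s hs) x)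
      (Continuous.continuousOn (by fun_prop))
      ((le_abs_self _).trans ((abs_le_linf hM₀ x).trans hρ₀r)) hr.le
  refine linf_le fun x => ?_
  rw [abs_of_nonneg (hF₀ x)]
  refine (hF x).trans_eq ?_
  rw [integral_gain_bound_eq hC2pos.ne' (by positivity) (by positivity)]
  ring

theorem statement12 {d : ℕ} (hd : 1 ≤ d)
    (c₁ : Rd d → Rd d → Rd d → ℝ) (C1 : ℝ)
    (hc₁meas : Measurable fun p : Rd d × Rd d × Rd d => c₁ p.1 p.2.1 p.2.2)
    (hc₁nn : ∀ x y z, 0 ≤ c₁ x y z)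
    (hc₁sym : ∀ x y z, c₁ x y z = c₁ y x z)
    (hc₁int₁₂ : ∀ z, Integrable fun p : Rd d × Rd d => c₁ p.1 p.2 z)
    (hc₁int₁₃ : ∀ y, Integrable fun p : Rd d × Rd d => c₁ p.1 y p.2)
    (hc₁int₂₃ : ∀ x, Integrable fun p : Rd d × Rd d => c₁ x p.1 p.2)
    (hc₁val₁₂ : ∀ z, (∫ x, ∫ y, c₁ x y z) = C1)
    (hc₁val₁₃ : ∀ y, (∫ x, ∫ z, c₁ x y z) = C1)
    (hc₁val₂₃ : ∀ x, (∫ y, ∫ z, c₁ x y z) = C1)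
    (c₂ : Rd d → Rd d → ℝ) (C2 : ℝ)
    (hc₂meas : Measurable fun p : Rd d × Rd d => c₂ p.1 p.2)
    (hc₂nn : ∀ x y, 0 ≤ c₂ x y)
    (hc₂int₁ : ∀ y, Integrable fun x => c₂ x y)
    (hc₂int₂ : ∀ x, Integrable fun y => c₂ x y)
    (hc₂val₁ : ∀ y, (∫ x, c₂ x y) = C2)
    (hc₂val₂ : ∀ x, (∫ y, c₂ x y) = C2)
    (hC2pos : 0 < C2)
    (φ₁ : Rd d → ℝ) (Φ₁ : ℝ) (hφ₁meas : Measurable φ₁) (hφ₁nn : ∀ u, 0 ≤ φ₁ u)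
    (hφ₁int : Integrable φ₁) (hφ₁val : (∫ u, φ₁ u) = Φ₁)
    (φ₂ : Rd d → ℝ) (Φ₂ : ℝ) (hφ₂meas : Measurable φ₂) (hφ₂nn : ∀ u, 0 ≤ φ₂ u)
    (hφ₂int : Integrable φ₂) (hφ₂val : (∫ u, φ₂ u) = Φ₂)
    (r γ T : ℝ) (hr : 0 < r) (hγ : 0 < γ) (hT : 0 < T)
    (ρ₀ : Rd d → ℝ) (hρ₀mem : MemLinf ρ₀) (hρ₀nn : ∀ x, 0 ≤ ρ₀ x)
    (hρ₀r : linf ρ₀ ≤ r)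
    (ρ : ℝ → Rd d → ℝ) (hρ : memB T γ C2 r ρ) :
    ∀ t ∈ Icc (0:ℝ) T,
      linf (Fmap c₁ c₂ φ₁ φ₂ C2 ρ₀ ρ t)
        ≤ Real.exp (-(t * C2)) * r *
            (1 + 3 * C1 * r / (2 * (2 * γ + 1) * C2) * (Real.exp ((2 * γ + 1) * C2 * t) - 1)
              + 2 / (γ + 1) * (Real.exp ((γ + 1) * C2 * t) - 1)) :=
  statement12_general c₁ C1 hc₁nn hc₁int₁₂ hc₁int₁₃ hc₁int₂₃ hc₁val₁₂ hc₁val₁₃ hc₁val₂₃ c₂ C2 hc₂nn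
    hc₂int₁ hc₂int₂ hc₂val₁ hc₂val₂ hC2pos φ₁ hφ₁nn φ₂ hφ₂nn r γ T hr hγ ρ₀ hρ₀mem hρ₀nn hρ₀r ρ hρ
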